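/- For every integer K ≥ 1 and every odd index j with 1 ≤ j ≤ 2K+1, the log-canonical bracket of the cluster parametrization satisfies {s_j, λ}_y = −s_j λ, as an identity of rational functions of y on (ℂ*)^{2K}. -/

import Mathlib

noncomputable section

open Finset

/-- The space of cluster variables `(y_1, …, y_{2K})`; we use 1-based indexing, so the
vector has `2K+1` slots and slot `0` is a dummy unused coordinate. -/
abbrev YV (K : ℕ) := Fin (2*K+1) → ℂ

/-- Access `y_j` by its (1-based) natural-number index. -/
def yv (K : ℕ) (y : YV K) (j : ℕ) : ℂ := y ⟨j % (2*K+1), Nat.mod_lt _ (by omega)⟩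

/-- Partial derivative with respect to `y_i`. -/
def pY (K : ℕ) (i : Fin (2*K+1)) (f : YV K → ℂ) (y : YV K) : ℂ :=
  fderiv ℂ f y (Pi.single i 1)

/-- The log-canonical bracket
`{f, g}_y = (1/4) Σ_{i=1}^{2K−1} y_i y_{i+1} (∂f/∂y_i ∂g/∂y_{i+1} − ∂f/∂y_{i+1} ∂g/∂y_i)`. -/
def lcBr (K : ℕ) (f g : YV K → ℂ) (y : YV K) : ℂ :=
  (1/4 : ℂ) * ∑ i : Fin (2*K-1),
    yv K y ((i:ℕ)+1) * yv K y ((i:ℕ)+2) *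
      (pY K ⟨(i:ℕ)+1, by have := i.isLt; omega⟩ f y *
         pY K ⟨(i:ℕ)+2, by have := i.isLt; omega⟩ g y
       - pY K ⟨(i:ℕ)+2, by have := i.isLt; omega⟩ f y *
         pY K ⟨(i:ℕ)+1, by have := i.isLt; omega⟩ g y)

/-- `nestList [a₁, …, a_m] = 1 + a₁(1 + a₂(⋯(1 + a_m)⋯))`. -/
def nestList : List ℂ → ℂ
  | [] => 1
  | a :: t => 1 + a * nestList t

/-- The Stokes parameters `s_n`, `n = 1, …, 2K+2` (paper's 1-based indexing) of the
cluster parametrization: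
`s_1 = −y_1^{−2}`;
`s_{2k} = (1+y_{2k}²)·∏_{j=1}^{2k} y_j^{2(−1)^{j+1}}` for `k = 1, …, K`;
`s_{2k+1} = −(1+y_{2k+1}²)·∏_{j=1}^{2k+1} y_j^{2(−1)^{j}}` for `k = 1, …, K−1`;
`s_{2K+1} = −∏_{j=1}^{2K} y_j^{2(−1)^{j}}`;
`s_{2K+2} = y_1²·(1+y_2²(1+y_4²(⋯(1+y_{2K}²)⋯)))·∏_{j=1}^{K} y_{2j}^{−4}`. -/
def sY (K : ℕ) (n : ℕ) (y : YV K) : ℂ :=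
  if n = 1 then -(yv K y 1) ^ (-2 : ℤ)
  else if n = 2*K+1 then -∏ j ∈ range (2*K), (yv K y (j+1)) ^ ((-1:ℤ)^(j+1) * 2)
  else if n = 2*K+2 then
    (yv K y 1)^2 * nestList (List.ofFn fun k : Fin K => (yv K y (2*(k:ℕ)+2))^2)
      * ∏ j ∈ range K, (yv K y (2*(j+1))) ^ (-4 : ℤ)
  else if n % 2 = 0 then
    (1 + (yv K y n)^2) * ∏ j ∈ range n, (yv K y (j+1)) ^ ((-1:ℤ)^j * 2)
  else -((1 + (yv K y n)^2) * ∏ j ∈ range n, (yv K y (j+1)) ^ ((-1:ℤ)^(j+1) * 2))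

/-- `λ = ∏_{j=1}^K y_{2j}²`. -/
def lamY (K : ℕ) (y : YV K) : ℂ := ∏ j ∈ range K, (yv K y (2*(j+1)))^2

/-! Write `E_i = y_i ∂/∂y_i`. Each summand of the bracket is
`E_i f · E_{i+1} g − E_{i+1} f · E_i g`, and since `λ` is a monomial in the even coordinates,
`E_i λ` is `2λ` for even `i` and `0` for odd `i`; the sum then telescopes to `{f, λ} = (λ/2) E_1 f`.
Every odd Stokes parameter is homogeneous of degree `−2` in `y_1`, so Euler's identity gives
`E_1 s_j = −2 s_j`. -/

open Function

def eulerOp {ι : Type*} [Fintype ι] [DecidableEq ι] (i : ι) (f : (ι → ℂ) → ℂ) (y : ι → ℂ) : ℂ :=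
  y i * fderiv ℂ f y (Pi.single i 1)

theorem eulerOp_eq_of_update {ι : Type*} [Fintype ι] [DecidableEq ι] {f : (ι → ℂ) → ℂ}
    {y : ι → ℂ} {i : ι} {n : ℤ} (hf : DifferentiableAt ℂ f y) (hyi : y i ≠ 0)
    (hhom : ∀ t, f (update y i t) = (t / y i) ^ n * f y) :
    eulerOp i f y = n * f y := by
  have hline : HasDerivAt (fun t => f (update y i t)) (fderiv ℂ f y (Pi.single i 1)) (y i) := by
    have hf' : HasFDerivAt f (fderiv ℂ f y) (update y i (y i)) := by
      rw [update_eq_self]; exact hf.hasFDerivAt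
    exact hf'.comp_hasDerivAt (y i) (hasDerivAt_update y i (y i))
  have hpow : HasDerivAt (fun t => (t / y i) ^ n * f y)
      (n * (y i / y i) ^ (n - 1) * (1 / y i) * f y) (y i) :=
    (((hasDerivAt_zpow n _ (Or.inl (by simpa using hyi))).comp (y i)
      ((hasDerivAt_id (y i)).div_const (y i))).mul_const _)
  simp only [hhom] at hline
  rw [eulerOp, hline.unique hpow, div_self hyi, one_zpow]
  field_simp

theorem differentiableAt_finsetProd {E α : Type*} [NormedAddCommGroup E] [NormedSpace ℂ E]
    {u : Finset α} {g : α → E → ℂ} {x : E} (hg : ∀ k ∈ u, DifferentiableAt ℂ (g k) x) :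
    DifferentiableAt ℂ (fun v => ∏ k ∈ u, g k v) x := by
  classical
  exact (HasFDerivAt.finsetProd fun k hk => (hg k hk).hasFDerivAt).differentiableAt

theorem sum_range_ite_even_telescope {M : Type*} [AddCommGroup M] (u : ℕ → M) (n : ℕ) :
    ∑ i ∈ range (2 * n + 1), (if Even i then u (i + 1) else -u (i + 2)) = u 1 := by
  induction n with
  | zero => simp
  | succ n ih =>
    rw [show 2 * (n + 1) + 1 = 2 * n + 1 + 1 + 1 by ring, sum_range_succ, sum_range_succ, ih,
      if_neg (by simp [parity_simps]), if_pos (by simp [parity_simps])]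
    abel

namespace Cluster

def coordIdx (K n : ℕ) : Fin (2 * K + 1) := ⟨n % (2 * K + 1), Nat.mod_lt _ (by omega)⟩

variable {K : ℕ}

theorem yv_eq (y : YV K) (n : ℕ) : yv K y n = y (coordIdx K n) := rfl

theorem coordIdx_of_lt {n : ℕ} (hn : n < 2 * K + 1) : coordIdx K n = ⟨n, hn⟩ := by
  simp [coordIdx, Nat.mod_eq_of_lt hn]

theorem yv_ne_zero {y : YV K} (hy : ∀ i : Fin (2 * K + 1), (i : ℕ) ≠ 0 → y i ≠ 0) {n : ℕ}
    (hn0 : 0 < n) (hn : n < 2 * K + 1) : yv K y n ≠ 0 :=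
  hy (coordIdx K n) (by rw [coordIdx_of_lt hn]; exact hn0.ne')

theorem yv_update_of_ne (y : YV K) {n m : ℕ} (t : ℂ) (hn : n < 2 * K + 1) (hm : m < 2 * K + 1)
    (hnm : n ≠ m) : yv K (update y (coordIdx K n) t) m = yv K y m := by
  rw [yv_eq, yv_eq, update_of_ne]
  simp [coordIdx_of_lt hn, coordIdx_of_lt hm, Fin.ext_iff, Ne.symm hnm]

theorem lcBr_eq_sum_eulerOp (f g : YV K → ℂ) (y : YV K) :
    lcBr K f g y = (1 / 4) * ∑ i ∈ range (2 * K - 1),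
      (eulerOp (coordIdx K (i + 1)) f y * eulerOp (coordIdx K (i + 2)) g y
        - eulerOp (coordIdx K (i + 2)) f y * eulerOp (coordIdx K (i + 1)) g y) := by
  rw [lcBr, ← Fin.sum_univ_eq_sum_range]
  congr 1
  refine sum_congr rfl fun i _ => ?_
  have hi := i.isLt
  simp only [yv_eq, eulerOp, pY, coordIdx_of_lt (show (i : ℕ) + 1 < 2 * K + 1 by omega),
    coordIdx_of_lt (show (i : ℕ) + 2 < 2 * K + 1 by omega)]
  ring

theorem differentiable_lamY : Differentiable ℂ (lamY K) := fun _ =>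
  differentiableAt_finsetProd fun _ _ => (differentiableAt_apply _ _).pow 2

theorem lamY_update (y : YV K) {n : ℕ} (hn0 : 0 < n) (hn : n ≤ 2 * K) (hyn : yv K y n ≠ 0)
    (t : ℂ) : lamY K (update y (coordIdx K n) t) =
      (t / yv K y n) ^ (if Even n then 2 else 0 : ℤ) * lamY K y := by
  by_cases hev : Even n
  · obtain ⟨m₀, rfl⟩ : ∃ m₀, n = 2 * (m₀ + 1) := ⟨n / 2 - 1, by grind⟩
    have hm₀ : m₀ ∈ range K := mem_range.mpr (by omega)
    rw [if_pos hev, lamY, lamY, ← mul_prod_erase _ _ hm₀, ← mul_prod_erase _ _ hm₀,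
      prod_congr rfl fun m hm => by
        rw [yv_update_of_ne y t (by omega) (by grind) (by grind)]]
    simp only [yv_eq, update_self] at hyn ⊢
    field_simp
  · rw [if_neg hev, zpow_zero, one_mul, lamY, lamY]
    refine prod_congr rfl fun m hm => ?_
    rw [yv_update_of_ne y t (by omega) (by grind) (by grind)]

theorem eulerOp_lamY (y : YV K) {n : ℕ} (hn0 : 0 < n) (hn : n ≤ 2 * K) (hyn : yv K y n ≠ 0) :
    eulerOp (coordIdx K n) (lamY K) y = (if Even n then 2 else 0) * lamY K y := by
  rw [eulerOp_eq_of_update (i := coordIdx K n) differentiable_lamY.differentiableAt hyn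
    (lamY_update y hn0 hn hyn)]
  split_ifs <;> norm_num

theorem lcBr_lamY (hK : 1 ≤ K) {y : YV K} (hy : ∀ i : Fin (2 * K + 1), (i : ℕ) ≠ 0 → y i ≠ 0)
    (f : YV K → ℂ) : lcBr K f (lamY K) y = lamY K y / 2 * eulerOp (coordIdx K 1) f y := by
  have hterm : ∀ i ∈ range (2 * K - 1),
      eulerOp (coordIdx K (i + 1)) f y * eulerOp (coordIdx K (i + 2)) (lamY K) y
        - eulerOp (coordIdx K (i + 2)) f y * eulerOp (coordIdx K (i + 1)) (lamY K) y
      = 2 * lamY K y * (if Even i then eulerOp (coordIdx K (i + 1)) f y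
          else -eulerOp (coordIdx K (i + 2)) f y) := by
    intro i hi
    have hi := mem_range.mp hi
    rw [eulerOp_lamY y (by omega) (by omega) (yv_ne_zero hy (by omega) (by omega)),
      eulerOp_lamY y (by omega) (by omega) (yv_ne_zero hy (by omega) (by omega))]
    by_cases hev : Even i <;>
      simp only [Nat.even_add_one, hev, not_true_eq_false, not_false_eq_true, ↓reduceIte] <;> ring
  rw [lcBr_eq_sum_eulerOp, sum_congr rfl hterm, ← mul_sum,
    show 2 * K - 1 = 2 * (K - 1) + 1 by omega,
    sum_range_ite_even_telescope (fun n => eulerOp (coordIdx K n) f y)]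
  ring

theorem differentiableAt_prod_zpow {y : YV K}
    (hy : ∀ i : Fin (2 * K + 1), (i : ℕ) ≠ 0 → y i ≠ 0) {m : ℕ} (hm : m ≤ 2 * K) (e : ℕ → ℤ) :
    DifferentiableAt ℂ (fun v => ∏ k ∈ range m, yv K v (k + 1) ^ e k) y :=
  differentiableAt_finsetProd fun k hk => (differentiableAt_apply _ _).zpow
    (Or.inl (yv_ne_zero hy (by omega) (by grind)))

theorem prod_zpow_update_one (y : YV K) (t : ℂ) (hy₁ : yv K y 1 ≠ 0) {m : ℕ} (hm₀ : 0 < m)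
    (hm : m ≤ 2 * K) (e : ℕ → ℤ) :
    ∏ k ∈ range m, yv K (update y (coordIdx K 1) t) (k + 1) ^ e k =
      (t / yv K y 1) ^ e 0 * ∏ k ∈ range m, yv K y (k + 1) ^ e k := by
  obtain ⟨m, rfl⟩ : ∃ m', m = m' + 1 := ⟨m - 1, by omega⟩
  rw [prod_range_succ', prod_range_succ', prod_congr rfl fun k hk => by
    rw [yv_update_of_ne y t (by omega) (by grind) (by omega)]]
  simp only [yv_eq, update_self, zero_add] at hy₁ ⊢
  rw [div_zpow]
  field_simp

-- Holds at `t = 0` as well, where both sides are `0` because `0 ^ (-2 : ℤ) = 0`.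
theorem sY_update_one (hK : 1 ≤ K) {y : YV K}
    (hy : ∀ i : Fin (2 * K + 1), (i : ℕ) ≠ 0 → y i ≠ 0) {j : ℕ} (hodd : Odd j)
    (hj : j ≤ 2 * K + 1) (t : ℂ) :
    sY K j (update y (coordIdx K 1) t) = (t / yv K y 1) ^ (-2 : ℤ) * sY K j y := by
  have hy₁ : yv K y 1 ≠ 0 := yv_ne_zero hy one_pos (by omega)
  have hj₂ : j % 2 = 1 := Nat.odd_iff.mp hodd
  unfold sY
  split_ifs with h₁ h₂
  · simp only [yv_eq, update_self] at hy₁ ⊢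
    rw [div_zpow]
    field_simp
  · rw [prod_zpow_update_one y t hy₁ (by omega) le_rfl]
    norm_num
  · omega
  · omega
  · rw [yv_update_of_ne y t (by omega) (by omega) (Ne.symm h₁),
      prod_zpow_update_one y t hy₁ (by omega) (by omega)]
    norm_num
    ring

theorem differentiableAt_sY (hK : 1 ≤ K) {y : YV K}
    (hy : ∀ i : Fin (2 * K + 1), (i : ℕ) ≠ 0 → y i ≠ 0) {j : ℕ} (hodd : Odd j)
    (hj : j ≤ 2 * K + 1) : DifferentiableAt ℂ (sY K j) y := by
  have hj₂ : j % 2 = 1 := Nat.odd_iff.mp hodd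
  unfold sY
  split_ifs with h₁ h₂
  · exact ((differentiableAt_apply (coordIdx K 1) y).zpow
      (Or.inl (yv_ne_zero hy one_pos (by omega)))).neg
  · exact (differentiableAt_prod_zpow hy le_rfl _).neg
  · omega
  · omega
  · exact ((((differentiableAt_apply _ _).pow 2).const_add 1).mul
      (differentiableAt_prod_zpow hy (by omega) _)).neg

theorem eulerOp_one_sY (hK : 1 ≤ K) {y : YV K}
    (hy : ∀ i : Fin (2 * K + 1), (i : ℕ) ≠ 0 → y i ≠ 0) {j : ℕ} (hodd : Odd j)
    (hj : j ≤ 2 * K + 1) : eulerOp (coordIdx K 1) (sY K j) y = -2 * sY K j y := by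
  rw [eulerOp_eq_of_update (i := coordIdx K 1) (differentiableAt_sY hK hy hodd hj)
    (yv_ne_zero hy one_pos (by omega)) (sY_update_one hK hy hodd hj)]
  norm_num

end Cluster

theorem cluster_bracket_sOdd_lambda_general (K : ℕ) (hK : 1 ≤ K) (y : YV K)
    (hy : ∀ i : Fin (2*K+1), (i:ℕ) ≠ 0 → y i ≠ 0)
    (j : ℕ) (hodd : Odd j) (hj : j ≤ 2*K+1) :
    lcBr K (sY K j) (lamY K) y = -(sY K j y * lamY K y) := by
  rw [Cluster.lcBr_lamY hK hy, Cluster.eulerOp_one_sY hK hy hodd hj]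
  ring

/-- for every odd index `j` with `1 ≤ j ≤ 2K+1`,
`{s_j, λ}_y = −s_j λ`, identically on `(ℂ*)^{2K}`. -/
theorem cluster_bracket_sOdd_lambda (K : ℕ) (hK : 1 ≤ K) (y : YV K)
    (hy : ∀ i : Fin (2*K+1), (i:ℕ) ≠ 0 → y i ≠ 0)
    (j : ℕ) (hodd : Odd j) (hj1 : 1 ≤ j) (hj : j ≤ 2*K+1) :
    lcBr K (sY K j) (lamY K) y = -(sY K j y * lamY K y) :=
  cluster_bracket_sOdd_lambda_general K hK y hy j hodd hj
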